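/- arXiv:2206.09539 — 2 statements merged into one kernel-verified Lean document; each statement's English description precedes it below -/
import Mathlib

section
/- Let v be C³ on the closure of K = (0,b) × (0,T) satisfying v_YY − 2 v_Yτ + p(Y) v = 0 with v(Y,0) = 1/2, and set V = v_τ. Then V satisfies the nonlinear equation V_YY − 2 V_Yτ + 4 V_Y(Y,0) V = 0 on K. -/
/-- Partial derivative in the first variable. -/
noncomputable def pd1 (f : ℝ → ℝ → ℝ) (x y : ℝ) : ℝ := deriv (fun x' => f x' y) x

/-- Partial derivative in the second variable. -/
noncomputable def pd2 (f : ℝ → ℝ → ℝ) (x y : ℝ) : ℝ := deriv (fun y' => f x y') y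

/-!
Write `L u = u_YY - 2 u_Yτ + p(Y) u` (`pdeOperator p u`). Since `p` does not depend on `τ`
and mixed partials of a `C³` function commute, `∂_τ (L v) = L (v_τ) = L V`, and `L v` vanishes
on the open set `K`, so `L V = 0` there. Letting `τ → 0` in `L v = 0` and using `v(·, 0) = 1/2`
(so `v_YY(Y, 0) = 0`) gives `p(Y) = 4 v_Yτ(Y, 0) = 4 V_Y(Y, 0)`, which turns `L V = 0` into the
stated equation.
-/

open Function Set Filter

lemma fderiv_clm_apply_const_apply {𝕜 E F G : Type*} [NontriviallyNormedField 𝕜]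
    [NormedAddCommGroup E] [NormedSpace 𝕜 E] [NormedAddCommGroup F] [NormedSpace 𝕜 F]
    [NormedAddCommGroup G] [NormedSpace 𝕜 G] {c : E → F →L[𝕜] G} {x : E}
    (hc : DifferentiableAt 𝕜 c x) (u : F) (w : E) :
    fderiv 𝕜 (fun y => c y u) x w = fderiv 𝕜 c x w u := by
  simp [fderiv_clm_apply hc (differentiableAt_const u)]

lemma deriv_eq_zero_of_forall_mem_Ioo {f : ℝ → ℝ} {a c x k : ℝ}
    (hf : ∀ t ∈ Ioo a c, f t = k) (hx : x ∈ Ioo a c) : deriv f x = 0 := by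
  have hfk : f =ᶠ[nhds x] fun _ => k := eventually_of_mem (isOpen_Ioo.mem_nhds hx) hf
  rw [hfk.deriv_eq, deriv_const]

lemma eq_zero_of_continuous_of_forall_mem_Ioo {f : ℝ → ℝ} {a c : ℝ} (hf : Continuous f)
    (hac : a < c) (hzero : ∀ t ∈ Ioo a c, f t = 0) : f a = 0 := by
  have ha : a ∈ closure (Ioo a c) := by
    rw [closure_Ioo hac.ne]
    exact left_mem_Icc.2 hac.le
  exact (isClosed_singleton.preimage hf).closure_subset_iff.2 hzero ha

section PartialDerivatives

variable {g : ℝ → ℝ → ℝ}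

lemma uncurry_pd1 (hg : Differentiable ℝ (uncurry g)) :
    uncurry (pd1 g) = fun q => fderiv ℝ (uncurry g) q (1, 0) :=
  funext fun (x, y) => ((hg (x, y)).hasFDerivAt.comp_hasDerivAt (f := fun x' => (x', y)) x
    ((hasDerivAt_id' x).prodMk (hasDerivAt_const x y))).deriv

lemma uncurry_pd2 (hg : Differentiable ℝ (uncurry g)) :
    uncurry (pd2 g) = fun q => fderiv ℝ (uncurry g) q (0, 1) :=
  funext fun (x, y) => ((hg (x, y)).hasFDerivAt.comp_hasDerivAt (f := fun y' => (x, y')) y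
    ((hasDerivAt_const y x).prodMk (hasDerivAt_id' y))).deriv

lemma hasDerivAt_pd2 (hg : Differentiable ℝ (uncurry g)) (x y : ℝ) :
    HasDerivAt (g x) (pd2 g x y) y :=
  ((hg (x, y)).comp (x := y) (differentiableAt_const x |>.prodMk differentiableAt_id)).hasDerivAt

lemma contDiff_pd1 {m n : WithTop ℕ∞} (hg : ContDiff ℝ n (uncurry g)) (hmn : m + 1 ≤ n) :
    ContDiff ℝ m (uncurry (pd1 g)) := by
  rw [uncurry_pd1 ((hg.of_le (le_add_self.trans hmn)).differentiable one_ne_zero)]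
  exact (hg.fderiv_right hmn).clm_apply contDiff_const

lemma contDiff_pd2 {m n : WithTop ℕ∞} (hg : ContDiff ℝ n (uncurry g)) (hmn : m + 1 ≤ n) :
    ContDiff ℝ m (uncurry (pd2 g)) := by
  rw [uncurry_pd2 ((hg.of_le (le_add_self.trans hmn)).differentiable one_ne_zero)]
  exact (hg.fderiv_right hmn).clm_apply contDiff_const

lemma pd2_pd1_eq_pd1_pd2 (hg : ContDiff ℝ 2 (uncurry g)) : pd2 (pd1 g) = pd1 (pd2 g) := by
  have hd : Differentiable ℝ (uncurry g) := hg.differentiable (by norm_num)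
  have hdd : Differentiable ℝ (fderiv ℝ (uncurry g)) :=
    (hg.fderiv_right (m := 1) le_rfl).differentiable one_ne_zero
  have h21 := uncurry_pd2 ((contDiff_pd1 hg (m := 1) le_rfl).differentiable one_ne_zero)
  have h12 := uncurry_pd1 ((contDiff_pd2 hg (m := 1) le_rfl).differentiable one_ne_zero)
  rw [uncurry_pd1 hd] at h21
  rw [uncurry_pd2 hd] at h12
  funext x y
  rw [← uncurry_apply_pair (pd2 (pd1 g)), ← uncurry_apply_pair (pd1 (pd2 g)), h21, h12]
  beta_reduce
  rw [fderiv_clm_apply_const_apply (hdd _), fderiv_clm_apply_const_apply (hdd _)]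
  exact (hg.contDiffAt.isSymmSndFDerivAt (by simp)).eq _ _

end PartialDerivatives

section Operator

variable {p : ℝ → ℝ} {u : ℝ → ℝ → ℝ}

noncomputable def pdeOperator (p : ℝ → ℝ) (u : ℝ → ℝ → ℝ) (x y : ℝ) : ℝ :=
  pd1 (pd1 u) x y - 2 * pd2 (pd1 u) x y + p x * u x y

lemma continuous_pdeOperator (hu : ContDiff ℝ 2 (uncurry u)) (x : ℝ) :
    Continuous (pdeOperator p u x) := by
  have h1 : ContDiff ℝ 1 (uncurry (pd1 u)) := contDiff_pd1 hu (by norm_num)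
  have h11 := (contDiff_pd1 h1 (m := 0) (by norm_num)).continuous.uncurry_left x
  have h21 := (contDiff_pd2 h1 (m := 0) (by norm_num)).continuous.uncurry_left x
  exact (h11.sub (continuous_const.mul h21)).add
    (continuous_const.mul (hu.continuous.uncurry_left x))

lemma pd2_pdeOperator (hu : ContDiff ℝ 3 (uncurry u)) :
    pd2 (pdeOperator p u) = pdeOperator p (pd2 u) := by
  have h1 : ContDiff ℝ 2 (uncurry (pd1 u)) := contDiff_pd1 hu (by norm_num)
  have h11 := (contDiff_pd1 h1 (m := 1) (by norm_num)).differentiable one_ne_zero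
  have h21 := (contDiff_pd2 h1 (m := 1) (by norm_num)).differentiable one_ne_zero
  have h0 := hu.differentiable (by norm_num)
  funext x y
  have hderiv := (((hasDerivAt_pd2 h11 x y).sub ((hasDerivAt_pd2 h21 x y).const_mul 2)).add
    ((hasDerivAt_pd2 h0 x y).const_mul (p x))).deriv
  rw [pdeOperator, ← pd2_pd1_eq_pd1_pd2 (hu.of_le (by norm_num)), ← pd2_pd1_eq_pd1_pd2 h1]
  exact hderiv

lemma coeff_eq_four_mul_pd1_pd2 (hu : ContDiff ℝ 2 (uncurry u)) {a c x : ℝ}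
    (hinit : ∀ x' ∈ Ioo a c, u x' 0 = 1 / 2) (hx : x ∈ Ioo a c)
    (h : pdeOperator p u x 0 = 0) :
    p x = 4 * pd1 (pd2 u) x 0 := by
  have hpd1 : ∀ x' ∈ Ioo a c, pd1 u x' 0 = 0 :=
    fun x' hx' => deriv_eq_zero_of_forall_mem_Ioo hinit hx'
  have hpd11 : pd1 (pd1 u) x 0 = 0 := deriv_eq_zero_of_forall_mem_Ioo hpd1 hx
  rw [pdeOperator, hpd11, pd2_pd1_eq_pd1_pd2 hu, hinit x hx] at h
  linarith

end Operator

theorem stmt4_general (b T : ℝ)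
    (v : ℝ → ℝ → ℝ) (p : ℝ → ℝ)
    (hv : ContDiff ℝ 3 (fun q : ℝ × ℝ => v q.1 q.2))
    (hinit : ∀ Y ∈ Set.Ioo (0:ℝ) b, v Y 0 = 1/2)
    (hpde : ∀ Y τ : ℝ, Y ∈ Set.Ioo (0:ℝ) b → τ ∈ Set.Ioo (0:ℝ) T →
      pd1 (pd1 v) Y τ - 2 * pd2 (pd1 v) Y τ + p Y * v Y τ = 0)
    (V : ℝ → ℝ → ℝ) (hV : ∀ Y τ, V Y τ = pd2 v Y τ) :
    ∀ Y τ : ℝ, Y ∈ Set.Ioo (0:ℝ) b → τ ∈ Set.Ioo (0:ℝ) T →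
      pd1 (pd1 V) Y τ - 2 * pd2 (pd1 V) Y τ + 4 * pd1 V Y 0 * V Y τ = 0 := by
  intro Y τ hY hτ
  obtain rfl : V = pd2 v := funext fun Y => funext (hV Y)
  have hv3 : ContDiff ℝ 3 (uncurry v) := hv
  have hvanish : ∀ t ∈ Ioo 0 T, pdeOperator p v Y t = 0 := fun t ht => hpde Y t hY ht
  have hv2 : ContDiff ℝ 2 (uncurry v) := hv3.of_le (by norm_num)
  have hp : p Y = 4 * pd1 (pd2 v) Y 0 :=
    coeff_eq_four_mul_pd1_pd2 hv2 hinit hY (eq_zero_of_continuous_of_forall_mem_Ioo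
      (continuous_pdeOperator hv2 Y) (hτ.1.trans hτ.2) hvanish)
  have hLV : pdeOperator p (pd2 v) Y τ = 0 := by
    rw [← pd2_pdeOperator hv3]
    exact deriv_eq_zero_of_forall_mem_Ioo hvanish hτ
  rwa [pdeOperator, hp] at hLV

/-- If v is C³, solves v_YY − 2 v_Yτ + p(Y) v = 0 on K = (0,b)×(0,T) with
v(Y,0) = 1/2, then V = v_τ satisfies V_YY − 2 V_Yτ + 4 V_Y(Y,0) V = 0 on K. -/
theorem stmt4 (b T : ℝ) (hb : 0 < b) (hT : 0 < T)
    (v : ℝ → ℝ → ℝ) (p : ℝ → ℝ)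
    (hv : ContDiff ℝ 3 (fun q : ℝ × ℝ => v q.1 q.2))
    (hinit : ∀ Y ∈ Set.Ioo (0:ℝ) b, v Y 0 = 1/2)
    (hpde : ∀ Y τ : ℝ, Y ∈ Set.Ioo (0:ℝ) b → τ ∈ Set.Ioo (0:ℝ) T →
      pd1 (pd1 v) Y τ - 2 * pd2 (pd1 v) Y τ + p Y * v Y τ = 0)
    (V : ℝ → ℝ → ℝ) (hV : ∀ Y τ, V Y τ = pd2 v Y τ) :
    ∀ Y τ : ℝ, Y ∈ Set.Ioo (0:ℝ) b → τ ∈ Set.Ioo (0:ℝ) T →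
      pd1 (pd1 V) Y τ - 2 * pd2 (pd1 V) Y τ + 4 * pd1 V Y 0 * V Y τ = 0 :=
  stmt4_general b T v p hv hinit hpde V hV
end

section
/- Let u : ℝ × [0,∞) → ℝ be a C² solution of c̃(X) u_ττ = u_XX where c̃ is C¹ and positive, let Y(X) = ∫₀^X √(c̃(s)) ds with inverse X(Y), and define w(Y,τ) = u(X(Y),τ) · c̃(X(Y))^{1/4}. Then, with Q(Y) = c̃(X(Y))^{−1/4} and p(Y) = Q″(Y)/Q(Y) − 2(Q′(Y)/Q(Y))², assuming c̃ is C³ so that Q is C², w satisfies w_ττ = w_YY + p(Y) w. -/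
lemma pd1_pd1_eq (f : ℝ → ℝ → ℝ) (x y : ℝ) :
    pd1 (pd1 f) x y = deriv (deriv fun x' => f x' y) x := rfl

lemma pd2_pd2_eq (f : ℝ → ℝ → ℝ) (x y : ℝ) :
    pd2 (pd2 f) x y = deriv (deriv fun y' => f x y') y := rfl

lemma contDiff_uncurry_left {n : WithTop ℕ∞} {f : ℝ → ℝ → ℝ}
    (hf : ContDiff ℝ n fun q : ℝ × ℝ => f q.1 q.2) (y : ℝ) :
    ContDiff ℝ n fun x => f x y :=
  hf.comp (contDiff_id.prodMk contDiff_const)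

lemma hasDerivAt_inverse_of_hasDerivAt_pos {F G d : ℝ → ℝ} (hF : ∀ x, HasDerivAt F (d x) x)
    (hd : ∀ x, 0 < d x) (hGF : ∀ x, G (F x) = x) (hFG : ∀ y, F (G y) = y) (y : ℝ) :
    HasDerivAt G (d (G y))⁻¹ y := by
  have hF_mono : StrictMono F := strictMono_of_hasDerivAt_pos hF hd
  have hG_mono : Monotone G := fun a b hab => by
    rwa [← hF_mono.le_iff_le, hFG, hFG]
  have hG_cont : Continuous G :=
    hG_mono.continuous_of_surjective fun x => ⟨F x, hGF x⟩
  exact (hF (G y)).of_local_left_inverse hG_cont.continuousAt (hd (G y)).ne'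
    (Filter.Eventually.of_forall hFG)

lemma contDiff_succ_of_hasDerivAt_comp {φ h : ℝ → ℝ} (hφ : ∀ y, HasDerivAt φ (h (φ y)) y)
    (n : ℕ) (hh : ContDiff ℝ n h) : ContDiff ℝ (n + 1) φ := by
  have hdiff : Differentiable ℝ φ := fun y => (hφ y).differentiableAt
  have hderiv : deriv φ = h ∘ φ := funext fun y => (hφ y).deriv
  induction n with
  | zero =>
    exact contDiff_succ_iff_deriv.2
      ⟨hdiff, by simp, hderiv ▸ hh.comp (contDiff_zero.2 hdiff.continuous)⟩
  | succ n ih =>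
    have hφn : ContDiff ℝ (n + 1) φ := ih (hh.of_le (by norm_cast; omega))
    refine contDiff_succ_iff_deriv.2 ⟨hdiff, by simp, ?_⟩
    rw [hderiv]
    exact hh.comp (by exact_mod_cast hφn)

lemma hasDerivAt_inverse_integral_sqrt {c Yf Xf : ℝ → ℝ} (hc : Continuous c)
    (hpos : ∀ x, 0 < c x) (hYf : ∀ X, Yf X = ∫ s in (0:ℝ)..X, √(c s))
    (hinv1 : ∀ X, Xf (Yf X) = X) (hinv2 : ∀ Y, Yf (Xf Y) = Y) (Y : ℝ) :
    HasDerivAt Xf (√(c (Xf Y)))⁻¹ Y := by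
  have hYf' : ∀ X, HasDerivAt Yf (√(c X)) X := by
    rw [funext hYf]
    exact ((hc.sqrt).integral_hasStrictDerivAt 0 · |>.hasDerivAt)
  exact hasDerivAt_inverse_of_hasDerivAt_pos hYf' (fun x => Real.sqrt_pos.2 (hpos x)) hinv1 hinv2 Y

lemma rpow_one_div_four_pow {x : ℝ} (hx : 0 ≤ x) (n : ℕ) : (x ^ ((1:ℝ)/4)) ^ n = x ^ ((n:ℝ)/4) := by
  rw [← Real.rpow_natCast, ← Real.rpow_mul hx]
  ring_nf

lemma deriv_inv_eq {a : ℝ → ℝ} (ha : Differentiable ℝ a) (ha0 : ∀ y, a y ≠ 0) :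
    deriv (fun y => (a y)⁻¹) = fun y => -deriv a y / a y ^ 2 :=
  funext fun y => ((ha y).hasDerivAt.inv (ha0 y)).deriv

lemma deriv_deriv_inv_div_sub (a : ℝ → ℝ) (ha : ContDiff ℝ 2 a) (ha0 : ∀ y, a y ≠ 0) (y : ℝ) :
    deriv (deriv fun y => (a y)⁻¹) y / (a y)⁻¹ - 2 * (deriv (fun y => (a y)⁻¹) y / (a y)⁻¹) ^ 2
      = -deriv (deriv a) y / a y := by
  have ha1 : Differentiable ℝ a := ha.differentiable (by norm_num)
  have ha2 : Differentiable ℝ (deriv a) := ha.differentiable_deriv_two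
  have hQ'' : HasDerivAt (fun y => -deriv a y / a y ^ 2)
      ((-deriv (deriv a) y * a y ^ 2 - -deriv a y * (2 * a y ^ (2 - 1) * deriv a y))
        / (a y ^ 2) ^ 2) y :=
    (ha2 y).hasDerivAt.neg.div ((ha1 y).hasDerivAt.pow 2) (pow_ne_zero 2 (ha0 y))
  rw [deriv_inv_eq ha1 ha0, hQ''.deriv]
  have := ha0 y
  field_simp
  ring

lemma deriv_deriv_comp_mul_of_hasDerivAt_inv_sq {f φ a : ℝ → ℝ} (hf : ContDiff ℝ 2 f)
    (ha : ContDiff ℝ 2 a) (ha0 : ∀ y, a y ≠ 0) (hφ : ∀ y, HasDerivAt φ (a y ^ 2)⁻¹ y) (y : ℝ) :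
    deriv (deriv fun y => f (φ y) * a y) y
      = deriv (deriv f) (φ y) / a y ^ 3 + f (φ y) * deriv (deriv a) y := by
  have hf1 : Differentiable ℝ f := hf.differentiable (by norm_num)
  have hf2 : Differentiable ℝ (deriv f) := hf.differentiable_deriv_two
  have ha1 : Differentiable ℝ a := ha.differentiable (by norm_num)
  have ha2 : Differentiable ℝ (deriv a) := ha.differentiable_deriv_two
  have hfφ : ∀ y, HasDerivAt (fun y => f (φ y)) (deriv f (φ y) * (a y ^ 2)⁻¹) y :=
    fun y => (hf1 (φ y)).hasDerivAt.comp y (hφ y)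
  have hf'φ : HasDerivAt (fun y => deriv f (φ y)) (deriv (deriv f) (φ y) * (a y ^ 2)⁻¹) y :=
    (hf2 (φ y)).hasDerivAt.comp y (hφ y)
  have hfirst : deriv (fun y => f (φ y) * a y)
      = fun y => deriv f (φ y) * (a y)⁻¹ + f (φ y) * deriv a y := by
    funext y
    rw [((hfφ y).fun_mul (ha1 y).hasDerivAt).deriv]
    have := ha0 y
    field_simp
  have hsecond : HasDerivAt (fun y => deriv f (φ y) * (a y)⁻¹ + f (φ y) * deriv a y)
      (deriv (deriv f) (φ y) * (a y ^ 2)⁻¹ * (a y)⁻¹ + deriv f (φ y) * (-deriv a y / a y ^ 2)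
        + (deriv f (φ y) * (a y ^ 2)⁻¹ * deriv a y + f (φ y) * deriv (deriv a) y)) y :=
    (hf'φ.fun_mul ((ha1 y).hasDerivAt.inv (ha0 y))).fun_add ((hfφ y).fun_mul (ha2 y).hasDerivAt)
  rw [hfirst, hsecond.deriv]
  have := ha0 y
  field_simp
  ring

/-- Liouville transform: the travel-time substitution Y(X) = ∫₀^X √c̃ together with
the amplitude factor c̃^{1/4} converts c̃(X) u_ττ = u_XX into w_ττ = w_YY + p(Y) w,
where Q(Y) = c̃(X(Y))^{−1/4} and p = Q″/Q − 2(Q′/Q)². -/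
theorem stmt11 (ct : ℝ → ℝ) (hct : ContDiff ℝ 3 ct) (hpos : ∀ x, 0 < ct x)
    (u : ℝ → ℝ → ℝ) (hu : ContDiff ℝ 2 (fun q : ℝ × ℝ => u q.1 q.2))
    (hpde : ∀ X τ : ℝ, ct X * pd2 (pd2 u) X τ = pd1 (pd1 u) X τ)
    (Yf Xf : ℝ → ℝ)
    (hYf : ∀ X, Yf X = ∫ s in (0:ℝ)..X, Real.sqrt (ct s))
    (hinv1 : ∀ X, Xf (Yf X) = X) (hinv2 : ∀ Y, Yf (Xf Y) = Y)
    (w : ℝ → ℝ → ℝ) (hw : ∀ Y τ, w Y τ = u (Xf Y) τ * (ct (Xf Y)) ^ ((1:ℝ)/4))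
    (Q p : ℝ → ℝ) (hQ : ∀ Y, Q Y = (ct (Xf Y)) ^ (-(1:ℝ)/4))
    (hp : ∀ Y, p Y = deriv (deriv Q) Y / Q Y - 2 * (deriv Q Y / Q Y)^2) :
    ∀ Y τ : ℝ, pd2 (pd2 w) Y τ = pd1 (pd1 w) Y τ + p Y * w Y τ := by
  have hXf' : ∀ Y, HasDerivAt Xf (√(ct (Xf Y)))⁻¹ Y :=
    hasDerivAt_inverse_integral_sqrt hct.continuous hpos hYf hinv1 hinv2
  have hXf : ContDiff ℝ 2 Xf :=
    contDiff_succ_of_hasDerivAt_comp hXf' 1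
      (((hct.of_le (by norm_num)).sqrt fun x => (hpos x).ne').inv
        fun x => (Real.sqrt_pos.2 (hpos x)).ne')
  set A : ℝ → ℝ := fun Y => ct (Xf Y) ^ ((1:ℝ)/4)
  have hA : ContDiff ℝ 2 A :=
    ((hct.of_le (by norm_num)).comp hXf).rpow_const_of_ne fun Y => (hpos (Xf Y)).ne'
  have hA0 : ∀ Y, A Y ≠ 0 := fun Y => (Real.rpow_pos_of_pos (hpos (Xf Y)) _).ne'
  have hXf'_A : ∀ Y, HasDerivAt Xf (A Y ^ 2)⁻¹ Y := fun Y => by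
    rw [rpow_one_div_four_pow (hpos (Xf Y)).le]
    convert hXf' Y using 2
    rw [Real.sqrt_eq_rpow]
    norm_num
  have hw_A : ∀ Y τ, w Y τ = u (Xf Y) τ * A Y := hw
  have hQ_A : Q = fun Y => (A Y)⁻¹ := funext fun Y => by
    rw [hQ, neg_div, Real.rpow_neg (hpos (Xf Y)).le]
  intro Y τ
  have hw_tt : pd2 (pd2 w) Y τ = pd2 (pd2 u) (Xf Y) τ * A Y := by
    simp only [pd2_pd2_eq, hw_A, deriv_mul_const_field']
  have hw_YY : pd1 (pd1 w) Y τ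
      = pd1 (pd1 u) (Xf Y) τ / A Y ^ 3 + u (Xf Y) τ * deriv (deriv A) Y := by
    simp only [pd1_pd1_eq, hw_A]
    exact deriv_deriv_comp_mul_of_hasDerivAt_inv_sq (contDiff_uncurry_left hu τ) hA hA0 hXf'_A Y
  have hct_A : ct (Xf Y) = A Y ^ 4 := by rw [rpow_one_div_four_pow (hpos (Xf Y)).le]; norm_num
  rw [hw_tt, hw_YY, hp, hQ_A, deriv_deriv_inv_div_sub A hA hA0, hw_A, ← hpde, hct_A]
  have := hA0 Y
  field_simp
  ring
end
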